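/- Let ψ be a branching mechanism of Lévy–Khintchine form with γ > 1, and let u ∈ (0, 2γ/(γ−1)). Then there exists a decreasing sequence (s_n)_{n≥1} of positive reals tending to 0, depending only on ψ and u, with the following property: for every probability space (Ω, 𝓕, P) carrying a family (T_r)_{r ∈ [0,∞)} of nonnegative random variables such that E[exp(−λ·T_r)] = exp(−r·(2·(ψ′(ψ^{−1}(λ)) − α))^{1/2}) for all λ, r ∈ [0,∞) and such that P-almost surely r ↦ T_r is nondecreasing, one has: (i) Σ_{n≥1} P(T_{2s_n} ≤ s_n^u) = ∞; and (ii) P-almost surely, limsup_{n→∞} T_{2s_{n+1}}/s_n^u < ∞. -/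

import Mathlib

open MeasureTheory Filter Set

noncomputable section

/-- The branching mechanism `ψ(λ) = αλ + βλ² + ∫_{(0,∞)} (e^{−λr} − 1 + λr) π(dr)`. -/
def psiFun (α β : ℝ) (π : Measure ℝ) : ℝ → ℝ := fun l =>
  α * l + β * l ^ 2 + ∫ r, (Real.exp (-(l * r)) - 1 + l * r) ∂π

/-- `ψ′(λ) = α + 2βλ + ∫_{(0,∞)} r(1 − e^{−λr}) π(dr)`. -/
def psiDeriv (α β : ℝ) (π : Measure ℝ) : ℝ → ℝ := fun l =>
  α + 2 * β * l + ∫ r, r * (1 - Real.exp (-(l * r))) ∂π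

/-- `(α, β, π)` is the datum of a (sub)critical branching mechanism of
Lévy–Khintchine form: `α, β ≥ 0`, `π` is a Borel measure carried by `(0,∞)`
with `∫ min(r, r²) π(dr) < ∞`. -/
structure IsBranchingMechanism (α β : ℝ) (π : Measure ℝ) : Prop where
  alpha_nonneg : 0 ≤ α
  beta_nonneg : 0 ≤ β
  carried_on_pos : π (Set.Iic 0) = 0
  integ_min : Integrable (fun r => min r (r ^ 2)) π

/-- The lower index `γ_f = sup {c ≥ 0 : f(λ)λ^{−c} → ∞}` (with `sup ∅ = 0`). -/
def lowerIndex (f : ℝ → ℝ) : ℝ :=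
  sSup {c : ℝ | 0 ≤ c ∧ Tendsto (fun l : ℝ => f l * l ^ (-c)) atTop atTop}

/-- The upper index `η_f = inf {c ≥ 0 : f(λ)λ^{−c} → 0}`. -/
def upperIndex (f : ℝ → ℝ) : ℝ :=
  sInf {c : ℝ | 0 ≤ c ∧ Tendsto (fun l : ℝ => f l * l ^ (-c)) atTop (nhds 0)}

/-- `δ_f = sup {c ≥ 0 : ∃ C > 0, ∀ 1 ≤ μ ≤ λ, C f(μ)μ^{−c} ≤ f(λ)λ^{−c}}`. -/
def deltaIndex (f : ℝ → ℝ) : ℝ :=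
  sSup {c : ℝ | 0 ≤ c ∧ ∃ C : ℝ, 0 < C ∧
    ∀ μ l : ℝ, 1 ≤ μ → μ ≤ l → C * (f μ * μ ^ (-c)) ≤ f l * l ^ (-c)}

/-!
Put `σ(λ) = √(λ / ψ(λ)) / 4`. Since `γ > 1`, `ψ(λ) ≥ λ^c₀` eventually for some `c₀ > 1`, so
`σ(λ) → 0`; and `ψ(λ) σ(λ)^u ≥ 2` for arbitrarily large `λ`: for `u ≤ 2` this follows from
`ψ(λ) ≥ λ`, for `u > 2` from `ψ(λ) ≤ K λ^c` infinitely often with `γ < c < u / (u - 2)`, an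
interval that is nonempty exactly because `u < 2γ / (γ - 1)`. Choose such `λ_n` with
`σ(λ_{n+1}) ≤ σ(λ_n) / 2^{n+1}` and put `s_n = σ(λ_n)`.

The bound `λ (ψ'(λ) - α) ≤ 2 ψ(λ)` gives `2 s_n √(2 (ψ'(λ_n) - α)) ≤ 1`. Testing the Laplace
transform of `T_{2 s_n}` at `ψ(λ_n)` yields `P(T_{2 s_n} ≤ s_n^u) ≥ e⁻¹ - e⁻²`, and testing that
of `T_{2 s_{n+1}}` at `ψ(λ_n)` yields `P(T_{2 s_{n+1}} > s_n^u) ≤ 2^{1-n}`; Borel–Cantelli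
concludes.
-/

open Topology

lemma exp_neg_sub_one_add_le_mul_one_sub_exp_neg (x : ℝ) :
    Real.exp (-x) - 1 + x ≤ x * (1 - Real.exp (-x)) := by
  have h := mul_le_mul_of_nonneg_left (Real.add_one_le_exp x) (Real.exp_pos (-x)).le
  rw [← Real.exp_add, neg_add_cancel, Real.exp_zero] at h
  nlinarith

lemma mul_one_sub_exp_neg_le {x : ℝ} (hx : 0 ≤ x) :
    x * (1 - Real.exp (-x)) ≤ 2 * (Real.exp (-x) - 1 + x) := by
  -- multiplied by `eˣ`, the claim reads `0 ≤ (x - 2) eˣ + x + 2`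
  have hg : Monotone fun y : ℝ => (y - 2) * Real.exp y + y + 2 := by
    refine monotone_of_deriv_nonneg (by fun_prop) fun y => ?_
    have hd : HasDerivAt (fun y : ℝ => (y - 2) * Real.exp y + y + 2) ((y - 1) * Real.exp y + 1) y :=
      (((((hasDerivAt_id' y).sub_const 2).mul (Real.hasDerivAt_exp y)).add
        (hasDerivAt_id' y)).add_const 2).congr_deriv (by ring)
    have h := mul_le_mul_of_nonneg_right (Real.one_sub_le_exp_neg y) (Real.exp_pos y).le
    rw [← Real.exp_add, neg_add_cancel, Real.exp_zero] at h
    rw [hd.deriv]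
    linarith
  have h0 : 0 ≤ (x - 2) * Real.exp x + x + 2 := by simpa using hg hx
  have hinv : Real.exp (-x) * Real.exp x = 1 := by
    rw [← Real.exp_add, neg_add_cancel, Real.exp_zero]
  nlinarith [mul_nonneg (Real.exp_pos (-x)).le h0]

lemma mul_one_sub_exp_neg_mul_le {l r : ℝ} (hr : 0 ≤ r) :
    r * (1 - Real.exp (-(l * r))) ≤ max 1 l * min r (r ^ 2) := by
  have h1 : 1 - Real.exp (-(l * r)) ≤ 1 := by linarith [Real.exp_pos (-(l * r))]
  have h2 : 1 - Real.exp (-(l * r)) ≤ l * r := by linarith [Real.one_sub_le_exp_neg (l * r)]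
  rcases le_total r 1 with hr1 | hr1
  · rw [min_eq_right (by nlinarith)]
    nlinarith [le_max_right 1 l, mul_le_mul_of_nonneg_left h2 hr]
  · rw [min_eq_left (by nlinarith)]
    nlinarith [le_max_left 1 l, mul_le_mul_of_nonneg_left h1 hr]

namespace IsBranchingMechanism

variable {α β : ℝ} {π : Measure ℝ}

lemma ae_pos (h : IsBranchingMechanism α β π) : ∀ᵐ r ∂π, 0 < r := by
  rw [ae_iff]
  convert h.carried_on_pos using 2
  ext r
  simp

lemma integrable_mul_one_sub_exp_neg (h : IsBranchingMechanism α β π) {l : ℝ} (hl : 0 ≤ l) :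
    Integrable (fun r => r * (1 - Real.exp (-(l * r)))) π := by
  refine (h.integ_min.const_mul (max 1 l)).mono' (by fun_prop) ?_
  filter_upwards [h.ae_pos] with r hr
  have h1 : 0 ≤ 1 - Real.exp (-(l * r)) := by
    linarith [Real.exp_le_one_iff.2 (neg_nonpos.2 (mul_nonneg hl hr.le))]
  rw [Real.norm_of_nonneg (mul_nonneg hr.le h1)]
  exact mul_one_sub_exp_neg_mul_le hr.le

lemma integrable_exp_neg_sub_one_add (h : IsBranchingMechanism α β π) {l : ℝ} (hl : 0 ≤ l) :
    Integrable (fun r => Real.exp (-(l * r)) - 1 + l * r) π := by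
  refine ((h.integrable_mul_one_sub_exp_neg hl).const_mul l).mono' (by fun_prop) ?_
  refine Eventually.of_forall fun r => ?_
  rw [Real.norm_of_nonneg (by linarith [Real.one_sub_le_exp_neg (l * r)]), ← mul_assoc]
  exact exp_neg_sub_one_add_le_mul_one_sub_exp_neg (l * r)

lemma mul_psiDeriv_sub_le (h : IsBranchingMechanism α β π) {l : ℝ} (hl : 0 ≤ l) :
    l * (psiDeriv α β π l - α) ≤ 2 * psiFun α β π l := by
  have key : l * ∫ r, r * (1 - Real.exp (-(l * r))) ∂π
      ≤ 2 * ∫ r, (Real.exp (-(l * r)) - 1 + l * r) ∂π := by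
    rw [← integral_const_mul, ← integral_const_mul]
    refine integral_mono_ae ((h.integrable_mul_one_sub_exp_neg hl).const_mul l)
      ((h.integrable_exp_neg_sub_one_add hl).const_mul 2) ?_
    filter_upwards [h.ae_pos] with r hr
    rw [← mul_assoc]
    exact mul_one_sub_exp_neg_le (mul_nonneg hl hr.le)
  unfold psiDeriv psiFun
  nlinarith [mul_nonneg h.alpha_nonneg hl]

end IsBranchingMechanism

lemma exists_eventually_rpow_le_of_lt_lowerIndex {f : ℝ → ℝ} {c : ℝ} (hc0 : 0 ≤ c)
    (hc : c < lowerIndex f) : ∃ c' > c, ∀ᶠ l in atTop, l ^ c' ≤ f l := by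
  have hne : {c : ℝ | 0 ≤ c ∧ Tendsto (fun l : ℝ => f l * l ^ (-c)) atTop atTop}.Nonempty := by
    by_contra hne
    rw [not_nonempty_iff_eq_empty] at hne
    rw [lowerIndex, hne, Real.sSup_empty] at hc
    linarith
  obtain ⟨c', ⟨-, hc'⟩, hcc'⟩ := exists_lt_of_lt_csSup hne hc
  refine ⟨c', hcc', ?_⟩
  filter_upwards [hc'.eventually_ge_atTop 1, eventually_gt_atTop 0] with l h1 hl
  rwa [Real.rpow_neg hl.le, ← div_eq_mul_inv, one_le_div (Real.rpow_pos_of_pos hl _)] at h1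

lemma exists_frequently_le_mul_rpow_of_lowerIndex_lt {f : ℝ → ℝ} {c : ℝ}
    (hpos : 0 < lowerIndex f) (hc : lowerIndex f < c) :
    ∃ K > 0, ∃ᶠ l in atTop, f l ≤ K * l ^ c := by
  have hbdd : BddAbove {c : ℝ | 0 ≤ c ∧ Tendsto (fun l : ℝ => f l * l ^ (-c)) atTop atTop} := by
    by_contra hb
    rw [lowerIndex, Real.sSup_of_not_bddAbove hb] at hpos
    exact lt_irrefl _ hpos
  have hnot : ¬ Tendsto (fun l : ℝ => f l * l ^ (-c)) atTop atTop := fun ht =>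
    (le_csSup hbdd ⟨hpos.le.trans hc.le, ht⟩).not_gt hc
  simp only [tendsto_atTop, not_forall, not_eventually, not_le] at hnot
  obtain ⟨K, hK⟩ := hnot
  refine ⟨max K 1, by positivity, (hK.and_eventually (eventually_gt_atTop 0)).mono ?_⟩
  rintro l ⟨hlK, hl⟩
  rw [Real.rpow_neg hl.le, ← div_eq_mul_inv, div_lt_iff₀ (Real.rpow_pos_of_pos hl _)] at hlK
  exact hlK.le.trans (mul_le_mul_of_nonneg_right (le_max_left K 1) (Real.rpow_nonneg hl.le c))

def scale (f : ℝ → ℝ) (l : ℝ) : ℝ := √(l / f l) / 4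

lemma scale_pos {f : ℝ → ℝ} {l : ℝ} (hl : 0 < l) (hf : 0 < f l) : 0 < scale f l :=
  div_pos (Real.sqrt_pos.2 (div_pos hl hf)) four_pos

lemma tendsto_scale_atTop_zero {f : ℝ → ℝ} {c : ℝ} (hc : 1 < c)
    (hf : ∀ᶠ l in atTop, l ^ c ≤ f l) : Tendsto (scale f) atTop (𝓝 0) := by
  have hratio : Tendsto (fun l => l / f l) atTop (𝓝 0) := by
    refine squeeze_zero' ?_ ?_ (tendsto_rpow_neg_atTop (sub_pos.2 hc))
    · filter_upwards [hf, eventually_gt_atTop 0] with l hfl hl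
      exact div_nonneg hl.le ((Real.rpow_pos_of_pos hl c).le.trans hfl)
    · filter_upwards [hf, eventually_gt_atTop 0] with l hfl hl
      rw [neg_sub, Real.rpow_sub hl, Real.rpow_one]
      exact div_le_div_of_nonneg_left hl.le (Real.rpow_pos_of_pos hl c) hfl
  show Tendsto (fun l => √(l / f l) / 4) atTop (𝓝 0)
  simpa using hratio.sqrt.div_const 4

lemma mul_scale_rpow {f : ℝ → ℝ} {l : ℝ} (hl : 0 < l) (hf : 0 < f l) (u : ℝ) :
    f l * scale f l ^ u = l * (l / f l) ^ (u / 2 - 1) / 4 ^ u := by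
  have hq : 0 < l / f l := div_pos hl hf
  rw [scale, Real.div_rpow (Real.sqrt_nonneg _) zero_le_four, Real.sqrt_eq_rpow,
    ← Real.rpow_mul hq.le, Real.rpow_sub_one hq.ne']
  field_simp

lemma eventually_two_le_mul_scale_rpow {f : ℝ → ℝ} {u : ℝ} (hu : u ≤ 2)
    (hf : ∀ᶠ l in atTop, l ≤ f l) : ∀ᶠ l in atTop, 2 ≤ f l * scale f l ^ u := by
  have h4 : (0 : ℝ) < 4 ^ u := Real.rpow_pos_of_pos four_pos u
  filter_upwards [hf, eventually_gt_atTop 0,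
    (tendsto_id.atTop_div_const h4).eventually_ge_atTop 2] with l hfl hl h2
  have hf0 : 0 < f l := hl.trans_le hfl
  have hq : 1 ≤ (l / f l) ^ (u / 2 - 1) :=
    Real.one_le_rpow_of_pos_of_le_one_of_nonpos (div_pos hl hf0) (div_le_one_of_le₀ hfl hf0.le)
      (by linarith)
  rw [mul_scale_rpow hl hf0]
  calc (2 : ℝ) ≤ l / 4 ^ u := h2
    _ ≤ l * (l / f l) ^ (u / 2 - 1) / 4 ^ u := by gcongr; exact le_mul_of_one_le_right hl.le hq

lemma frequently_two_le_mul_scale_rpow {f : ℝ → ℝ} {u c K : ℝ} (hu : 2 < u)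
    (hc : c * (u - 2) < u) (hK : 0 < K) (hf : ∃ᶠ l in atTop, f l ≤ K * l ^ c)
    (hpos : ∀ᶠ l in atTop, 0 < f l) : ∃ᶠ l in atTop, 2 ≤ f l * scale f l ^ u := by
  set p := u / 2 - 1
  have hp : 0 < p := by simp only [p]; linarith
  have hθ : 0 < 1 + (1 - c) * p := by simp only [p]; nlinarith
  have hD : 0 < K ^ p * 4 ^ u := by positivity
  refine hf.mp ?_
  filter_upwards [hpos, eventually_gt_atTop 0,
    ((tendsto_rpow_atTop hθ).atTop_div_const hD).eventually_ge_atTop 2] with l hfl hl h2 hKl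
  have hlc : 0 < l ^ c := Real.rpow_pos_of_pos hl c
  have hmono : (l / (K * l ^ c)) ^ p ≤ (l / f l) ^ p :=
    Real.rpow_le_rpow (by positivity) (div_le_div_of_nonneg_left hl.le hfl hKl) hp.le
  have heq : l ^ (1 + (1 - c) * p) / (K ^ p * 4 ^ u) = l * (l / (K * l ^ c)) ^ p / 4 ^ u := by
    rw [Real.div_rpow hl.le (by positivity), Real.mul_rpow hK.le hlc.le, ← Real.rpow_mul hl.le,
      Real.rpow_add hl, Real.rpow_one, sub_mul, one_mul, Real.rpow_sub hl]
    field_simp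
  rw [mul_scale_rpow hl hfl]
  calc (2 : ℝ) ≤ l ^ (1 + (1 - c) * p) / (K ^ p * 4 ^ u) := h2
    _ = l * (l / (K * l ^ c)) ^ p / 4 ^ u := heq
    _ ≤ l * (l / f l) ^ p / 4 ^ u := by gcongr

lemma scale_mul_sqrt_le {f : ℝ → ℝ} {l d : ℝ} (hl : 0 < l) (hf : 0 < f l)
    (hd : l * d ≤ 4 * f l) : 2 * scale f l * √d ≤ 1 := by
  have hd' : d ≤ 4 * f l / l := by rw [le_div_iff₀ hl]; linarith
  calc 2 * scale f l * √d ≤ 2 * scale f l * √(4 * f l / l) := by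
        have := scale_pos hl hf
        gcongr
    _ = √(l / f l * (4 * f l / l)) / 2 := by
        rw [scale, Real.sqrt_mul (div_nonneg hl.le hf.le)]; ring
    _ = 1 := by
        rw [show l / f l * (4 * f l / l) = 2 ^ 2 by field_simp; norm_num,
          Real.sqrt_sq zero_le_two]
        norm_num

lemma exists_scale_le_of_one_lt_lowerIndex {f : ℝ → ℝ} (hγ : 1 < lowerIndex f) {u : ℝ}
    (hu : u < 2 * lowerIndex f / (lowerIndex f - 1)) {ε : ℝ} (hε : 0 < ε) :
    ∃ l, (0 < l ∧ 0 < f l ∧ 2 ≤ f l * scale f l ^ u) ∧ scale f l ≤ ε := by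
  obtain ⟨c₀, hc₀, hlow⟩ := exists_eventually_rpow_le_of_lt_lowerIndex zero_le_one hγ
  have hge : ∀ᶠ l in atTop, l ≤ f l := by
    filter_upwards [hlow, eventually_ge_atTop 1] with l hfl hl
    exact (Real.self_le_rpow_of_one_le hl hc₀.le).trans hfl
  have hpos : ∀ᶠ l in atTop, 0 < f l := by
    filter_upwards [hge, eventually_gt_atTop 0] with l hfl hl using hl.trans_le hfl
  have hfreq : ∃ᶠ l in atTop, 2 ≤ f l * scale f l ^ u := by
    rcases le_or_gt u 2 with hu2 | hu2
    · exact (eventually_two_le_mul_scale_rpow hu2 hge).frequently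
    · have hγu : lowerIndex f < u / (u - 2) := by
        rw [lt_div_iff₀ (by linarith)]
        rw [lt_div_iff₀ (by linarith)] at hu
        linarith
      obtain ⟨c, hγc, hcu⟩ := exists_between hγu
      obtain ⟨K, hK, hKf⟩ := exists_frequently_le_mul_rpow_of_lowerIndex_lt (by linarith) hγc
      exact frequently_two_le_mul_scale_rpow hu2 ((lt_div_iff₀ (by linarith)).1 hcu) hK hKf hpos
  obtain ⟨l, h2, hl, hfl, hlε⟩ := (hfreq.and_eventually ((eventually_gt_atTop 0).and
    (hpos.and ((tendsto_scale_atTop_zero hc₀ hlow).eventually_lt_const hε)))).exists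
  exact ⟨l, ⟨hl, hfl, h2⟩, hlε.le⟩

lemma exists_seq_le_div_two_pow {α : Type*} {p : α → Prop} {σ : α → ℝ}
    (hσ : ∀ x, p x → 0 < σ x) (h : ∀ ε > 0, ∃ x, p x ∧ σ x ≤ ε) :
    ∃ x : ℕ → α, (∀ n, p (x n)) ∧ ∀ n, σ (x (n + 1)) ≤ σ (x n) / 2 ^ (n + 1) := by
  have hstep : ∀ (n : ℕ) (y : {y // p y}), ∃ z : {z // p z}, σ z ≤ σ y / 2 ^ (n + 1) :=
    fun n y => by
      obtain ⟨z, hz, hzy⟩ := h _ (div_pos (hσ y y.2) (pow_pos two_pos _))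
      exact ⟨⟨z, hz⟩, hzy⟩
  choose next hnext using hstep
  obtain ⟨x₀, hx₀, -⟩ := h 1 one_pos
  let x : ℕ → {y // p y} := fun n => Nat.rec ⟨x₀, hx₀⟩ next n
  exact ⟨fun n => (x n).1, fun n => (x n).2, fun n => hnext n (x n)⟩

lemma antitone_of_le_div_two_pow {s : ℕ → ℝ} (hs : ∀ n, 0 < s n)
    (h : ∀ n, s (n + 1) ≤ s n / 2 ^ (n + 1)) : Antitone s :=
  antitone_nat_of_succ_le fun n => (h n).trans (div_le_self (hs n).le (one_le_pow₀ one_le_two))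

lemma tendsto_zero_of_le_div_two_pow {s : ℕ → ℝ} (hs : ∀ n, 0 < s n)
    (h : ∀ n, s (n + 1) ≤ s n / 2 ^ (n + 1)) : Tendsto s atTop (𝓝 0) := by
  have hle : ∀ n, s n ≤ s 0 * (1 / 2) ^ n := by
    intro n
    induction n with
    | zero => simp
    | succ n ih =>
      calc s (n + 1) ≤ s n / 2 ^ (n + 1) := h n
        _ ≤ s n / 2 :=
            div_le_div_of_nonneg_left (hs n).le two_pos (le_self_pow₀ one_le_two n.succ_ne_zero)
        _ ≤ s 0 * (1 / 2) ^ n / 2 := by gcongr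
        _ = s 0 * (1 / 2) ^ (n + 1) := by ring
  refine squeeze_zero (fun n => (hs n).le) hle ?_
  simpa using (tendsto_pow_atTop_nhds_zero_of_lt_one (by norm_num : (0 : ℝ) ≤ 1 / 2)
    (by norm_num)).const_mul (s 0)

lemma one_sub_exp_neg_le_half_pow {a b g : ℝ} {n : ℕ} (hg : 0 ≤ g) (hb : 2 * b * g ≤ 1)
    (hab : a ≤ b / 2 ^ (n + 1)) : 1 - Real.exp (-(2 * a * g)) ≤ (1 / 2) ^ n :=
  calc 1 - Real.exp (-(2 * a * g)) ≤ 2 * a * g := by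
        linarith [Real.one_sub_le_exp_neg (2 * a * g)]
    _ ≤ 2 * (b / 2 ^ (n + 1)) * g := by gcongr
    _ = 2 * b * g / 2 ^ (n + 1) := by ring
    _ ≤ 1 / 2 ^ (n + 1) := by gcongr
    _ ≤ (1 / 2) ^ n := by rw [one_div_pow]; gcongr <;> norm_num

section Laplace

variable {Ω : Type*} [MeasurableSpace Ω] {P : Measure Ω}

lemma integrable_exp_neg_mul [IsFiniteMeasure P] {X : Ω → ℝ} (hX : Measurable X)
    (hX0 : ∀ ω, 0 ≤ X ω) {lam : ℝ} (hlam : 0 ≤ lam) :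
    Integrable (fun ω => Real.exp (-(lam * X ω))) P := by
  refine (integrable_const (1 : ℝ)).mono' (by fun_prop) (Eventually.of_forall fun ω => ?_)
  rw [Real.norm_of_nonneg (Real.exp_pos _).le, Real.exp_le_one_iff]
  exact neg_nonpos.2 (mul_nonneg hlam (hX0 ω))

lemma integral_exp_neg_mul_le [IsFiniteMeasure P] {X : Ω → ℝ} (hX : Measurable X)
    (hX0 : ∀ ω, 0 ≤ X ω) {lam : ℝ} (hlam : 0 ≤ lam) (t : ℝ) :
    ∫ ω, Real.exp (-(lam * X ω)) ∂P
      ≤ P.real {ω | X ω ≤ t} + Real.exp (-(lam * t)) * P.real {ω | t < X ω} := by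
  have hle : MeasurableSet {ω | X ω ≤ t} := measurableSet_le hX measurable_const
  have hlt : MeasurableSet {ω | t < X ω} := measurableSet_lt measurable_const hX
  have hpt : ∀ ω, Real.exp (-(lam * X ω)) ≤ {ω | X ω ≤ t}.indicator (fun _ => 1) ω
      + {ω | t < X ω}.indicator (fun _ => Real.exp (-(lam * t))) ω := by
    intro ω
    by_cases hω : X ω ≤ t
    · have : ¬ t < X ω := not_lt.2 hω
      simp only [indicator, mem_ofPred_eq, hω, this, if_true, if_false, add_zero,
        Real.exp_le_one_iff, neg_nonpos]
      exact mul_nonneg hlam (hX0 ω)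
    · have : t < X ω := not_le.1 hω
      simp only [indicator, mem_ofPred_eq, hω, this, if_true, if_false, zero_add,
        Real.exp_le_exp, neg_le_neg_iff]
      exact mul_le_mul_of_nonneg_left this.le hlam
  calc ∫ ω, Real.exp (-(lam * X ω)) ∂P
      ≤ ∫ ω, ({ω | X ω ≤ t}.indicator (fun _ => 1) ω
          + {ω | t < X ω}.indicator (fun _ => Real.exp (-(lam * t))) ω) ∂P :=
        integral_mono (integrable_exp_neg_mul hX hX0 hlam)
          (((integrable_const _).indicator hle).add ((integrable_const _).indicator hlt)) hpt
    _ = _ := by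
        rw [integral_add ((integrable_const _).indicator hle) ((integrable_const _).indicator hlt),
          integral_indicator_const _ hle, integral_indicator_const _ hlt, smul_eq_mul,
          smul_eq_mul, mul_one, mul_comm]

variable [IsProbabilityMeasure P]

lemma tsum_measure_le_eq_top {X : ℕ → Ω → ℝ} (hX : ∀ n, Measurable (X n))
    (hX0 : ∀ n ω, 0 ≤ X n ω) {lam t : ℕ → ℝ} (hlam : ∀ n, 0 ≤ lam n) (ht : ∀ n, 2 ≤ lam n * t n)
    (hL : ∀ n, Real.exp (-1) ≤ ∫ ω, Real.exp (-(lam n * X n ω)) ∂P) :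
    ∑' n, P {ω | X n ω ≤ t n} = ⊤ := by
  have hc : 0 < Real.exp (-1) - Real.exp (-2) := by
    linarith [Real.exp_lt_exp.2 (by norm_num : (-2 : ℝ) < -1)]
  have hlow : ∀ n, ENNReal.ofReal (Real.exp (-1) - Real.exp (-2)) ≤ P {ω | X n ω ≤ t n} := by
    intro n
    have h1 := integral_exp_neg_mul_le (hX n) (hX0 n) (hlam n) (t n) (P := P)
    have h2 : Real.exp (-(lam n * t n)) ≤ Real.exp (-2) := Real.exp_le_exp.2 (by linarith [ht n])
    have h3 : P.real {ω | t n < X n ω} ≤ 1 := measureReal_le_one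
    rw [← ofReal_measureReal]
    refine ENNReal.ofReal_le_ofReal ?_
    nlinarith [hL n, Real.exp_pos (-(lam n * t n)),
      measureReal_nonneg (μ := P) (s := {ω | t n < X n ω})]
  refine top_le_iff.1 ((ENNReal.tsum_const_eq_top_of_ne_zero ?_).symm.le.trans
    (ENNReal.tsum_le_tsum hlow))
  exact (ENNReal.ofReal_pos.2 hc).ne'

lemma ae_exists_forall_div_le {X : ℕ → Ω → ℝ} (hX : ∀ n, Measurable (X n))
    (hX0 : ∀ n ω, 0 ≤ X n ω) {lam t ε : ℕ → ℝ} (hlam : ∀ n, 0 ≤ lam n) (ht0 : ∀ n, 0 < t n)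
    (ht : ∀ n, 2 ≤ lam n * t n) (hε : Summable ε)
    (hL : ∀ n, 1 - ∫ ω, Real.exp (-(lam n * X n ω)) ∂P ≤ ε n) :
    ∀ᵐ ω ∂P, ∃ M, ∀ n, X n ω / t n ≤ M := by
  have he2 : Real.exp (-2) ≤ 1 / 2 := by
    rw [Real.exp_neg, one_div]
    exact inv_anti₀ two_pos (by linarith [Real.add_one_le_exp (2 : ℝ)])
  have hA : ∀ n, P.real {ω | t n < X n ω} ≤ 2 * ε n := by
    intro n
    have h1 := integral_exp_neg_mul_le (hX n) (hX0 n) (hlam n) (t n) (P := P)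
    have h2 : Real.exp (-(lam n * t n)) ≤ Real.exp (-2) := Real.exp_le_exp.2 (by linarith [ht n])
    have hcompl : P.real {ω | X n ω ≤ t n} = 1 - P.real {ω | t n < X n ω} := by
      rw [← probReal_compl_eq_one_sub (measurableSet_lt measurable_const (hX n))]
      congr 1
      ext ω
      simp
    nlinarith [hL n, measureReal_nonneg (μ := P) (s := {ω | t n < X n ω})]
  have hsum : ∑' n, P {ω | t n < X n ω} ≠ ⊤ := by
    have hε0 : ∀ n, 0 ≤ 2 * ε n := fun n => measureReal_nonneg.trans (hA n)
    refine ne_top_of_le_ne_top ?_ (ENNReal.tsum_le_tsum fun n =>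
      (ofReal_measureReal (μ := P)).symm.le.trans (ENNReal.ofReal_le_ofReal (hA n)))
    rw [← ENNReal.ofReal_tsum_of_nonneg hε0 (hε.mul_left 2)]
    exact ENNReal.ofReal_ne_top
  filter_upwards [ae_eventually_notMem hsum] with ω hω
  have hb : ∀ᶠ n in atTop, X n ω / t n ≤ 1 :=
    hω.mono fun n hn => (div_le_one (ht0 n)).2 (not_lt.1 hn)
  obtain ⟨M, hM⟩ := (isBoundedUnder_of_eventually_le hb).bddAbove_range
  exact ⟨M, fun n => hM ⟨n, rfl⟩⟩

end Laplace

theorem statement16_general (α β : ℝ) (π : Measure ℝ) (h : IsBranchingMechanism α β π)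
    (hγ : 1 < lowerIndex (psiFun α β π))
    (ψinv : ℝ → ℝ)
    (hψinv' : ∀ y : ℝ, 0 ≤ y → ψinv (psiFun α β π y) = y)
    (u : ℝ)
    (hu : u < 2 * lowerIndex (psiFun α β π) / (lowerIndex (psiFun α β π) - 1)) :
    ∃ s : ℕ → ℝ,
      (∀ n : ℕ, 0 < s n) ∧ Antitone s ∧ Tendsto s atTop (nhds 0) ∧
      ∀ (Ω : Type) [MeasurableSpace Ω] (P : Measure Ω) [IsProbabilityMeasure P],
        ∀ T : ℝ → Ω → ℝ,
          (∀ r : ℝ, Measurable (T r)) →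
          (∀ (r : ℝ) (ω : Ω), 0 ≤ T r ω) →
          (∀ lam r : ℝ, 0 ≤ lam → 0 ≤ r →
            (∫ ω, Real.exp (-(lam * T r ω)) ∂P)
              = Real.exp (-(r * Real.sqrt (2 * (psiDeriv α β π (ψinv lam) - α))))) →
          (∀ᵐ ω ∂P, Monotone fun r => T r ω) →
          (∑' n : ℕ, P {ω | T (2 * s (n + 1)) ω ≤ s (n + 1) ^ u} = ⊤) ∧
          (∀ᵐ ω ∂P, ∃ M : ℝ, ∀ n : ℕ, 1 ≤ n →
            T (2 * s (n + 1)) ω / s n ^ u ≤ M) := by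
  obtain ⟨l, hl, hratio⟩ := exists_seq_le_div_two_pow (fun x hx => scale_pos hx.1 hx.2.1)
    fun ε hε => exists_scale_le_of_one_lt_lowerIndex hγ hu hε
  set s := fun n => scale (psiFun α β π) (l n)
  have hs : ∀ n, 0 < s n := fun n => scale_pos (hl n).1 (hl n).2.1
  refine ⟨s, hs, antitone_of_le_div_two_pow hs hratio, tendsto_zero_of_le_div_two_pow hs hratio,
    fun Ω _ P _ T hTm hT0 hLap _ => ?_⟩
  set g := fun n => √(2 * (psiDeriv α β π (l n) - α))
  have hLap' : ∀ n r, 0 ≤ r →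
      ∫ ω, Real.exp (-(psiFun α β π (l n) * T r ω)) ∂P = Real.exp (-(r * g n)) := fun n r hr => by
    rw [hLap _ _ (hl n).2.1.le hr, hψinv' _ (hl n).1.le]
  have hsg : ∀ n, 2 * s n * g n ≤ 1 := fun n => scale_mul_sqrt_le (hl n).1 (hl n).2.1
    (by linarith [h.mul_psiDeriv_sub_le (hl n).1.le])
  have hdiv : ∀ n, Real.exp (-1)
      ≤ ∫ ω, Real.exp (-(psiFun α β π (l (n + 1)) * T (2 * s (n + 1)) ω)) ∂P :=
    fun n => by
      rw [hLap' _ _ (by linarith [hs (n + 1)])]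
      exact Real.exp_le_exp.2 (by linarith [hsg (n + 1)])
  have hconv : ∀ n,
      1 - ∫ ω, Real.exp (-(psiFun α β π (l n) * T (2 * s (n + 1)) ω)) ∂P ≤ (1 / 2) ^ n :=
    fun n => by
      rw [hLap' _ _ (by linarith [hs (n + 1)])]
      exact one_sub_exp_neg_le_half_pow (Real.sqrt_nonneg _) (hsg n) (hratio n)
  refine ⟨tsum_measure_le_eq_top (fun n => hTm _) (fun n => hT0 _) (fun n => (hl (n + 1)).2.1.le)
    (fun n => (hl (n + 1)).2.2) hdiv, ?_⟩
  filter_upwards [ae_exists_forall_div_le (fun n => hTm _) (fun n => hT0 _) (fun n => (hl n).2.1.le)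
    (fun n => Real.rpow_pos_of_pos (hs n) u) (fun n => (hl n).2.2) summable_geometric_two hconv]
    with ω ⟨M, hM⟩
  exact ⟨M, fun n _ => hM n⟩

/-- if γ > 1 and u ∈ (0, 2γ/(γ−1)), there is a decreasing sequence
(s_n)_{n≥1} of positive reals tending to 0 such that for any family (T_r) with
Laplace exponent (2(ψ′∘ψ^{−1} − α))^{1/2} that is a.s. nondecreasing in r,
Σ_{n≥1} P(T_{2s_n} ≤ s_n^u) = ∞ and P-a.s. limsup_n T_{2s_{n+1}}/s_n^u < ∞. -/
theorem statement16 (α β : ℝ) (π : Measure ℝ) (h : IsBranchingMechanism α β π)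
    (hγ : 1 < lowerIndex (psiFun α β π))
    (ψinv : ℝ → ℝ)
    (hψinv : ∀ x : ℝ, 0 ≤ x → 0 ≤ ψinv x ∧ psiFun α β π (ψinv x) = x)
    (hψinv' : ∀ y : ℝ, 0 ≤ y → ψinv (psiFun α β π y) = y)
    (u : ℝ) (hu0 : 0 < u)
    (hu : u < 2 * lowerIndex (psiFun α β π) / (lowerIndex (psiFun α β π) - 1)) :
    ∃ s : ℕ → ℝ,
      (∀ n : ℕ, 0 < s n) ∧ Antitone s ∧ Tendsto s atTop (nhds 0) ∧
      ∀ (Ω : Type) [MeasurableSpace Ω] (P : Measure Ω) [IsProbabilityMeasure P],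
        ∀ T : ℝ → Ω → ℝ,
          (∀ r : ℝ, Measurable (T r)) →
          (∀ (r : ℝ) (ω : Ω), 0 ≤ T r ω) →
          (∀ lam r : ℝ, 0 ≤ lam → 0 ≤ r →
            (∫ ω, Real.exp (-(lam * T r ω)) ∂P)
              = Real.exp (-(r * Real.sqrt (2 * (psiDeriv α β π (ψinv lam) - α))))) →
          (∀ᵐ ω ∂P, Monotone fun r => T r ω) →
          (∑' n : ℕ, P {ω | T (2 * s (n + 1)) ω ≤ s (n + 1) ^ u} = ⊤) ∧
          (∀ᵐ ω ∂P, ∃ M : ℝ, ∀ n : ℕ, 1 ≤ n →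
            T (2 * s (n + 1)) ω / s n ^ u ≤ M) :=
  statement16_general α β π h hγ ψinv hψinv' u hu
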